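/- The baseline-corrected term recovers the two-sample sum-and-sample form: for any s ∈ S^k, ∑_{s'∈S^k} p(s') R^{D\{s}}(S^k, s') f(s') = E_{b_2 ~ p(b_2 | S^k, b_1 = s)}[ p(s) f(s) + (1 − p(s)) f(b_2) ], where R^{D\{s}}(S^k, s) = 1 by convention. -/

import Mathlib

open Finset MeasureTheory

variable {α : Type*}

/-- Probability of drawing the ordered sample `B` sequentially without replacement
from (unnormalized) weights `p`, when `t` is the total remaining probability mass. -/
noncomputable def ordProb (p : α → ℝ) : ℝ → List α → ℝ
  | _, [] => 1
  | t, b :: L => (p b / t) * ordProb p (t - p b) L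

/-- Probability of drawing the unordered sample `S` without replacement:
sum of `ordProb` over all orderings of `S`. -/
noncomputable def setProb (p : α → ℝ) (t : ℝ) (S : Finset α) : ℝ :=
  (S.toList.permutations.map (ordProb p t)).sum

/-!
The conditional law `q s' = p s' / (1 - p s) * R^{D∖{s}}(S, s')` of the second draw is a
probability distribution on `S \ {s}`: multiplied by the normalizer
`setProb p (1 - p s) (S \ {s})`, its total mass is the first-step decomposition of that
normalizer over the element drawn first. Hence the expectation of the constant `p s * f s` is
`p s * f s`, and since `(1 - p s) * q s' = p s' * R^{D∖{s}}(S, s')`, the expectation of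
`(1 - p s) * f b₂` is the rest of the sum over `S`.
-/

lemma ordProb_pos {p : α → ℝ} {L : List α} {t : ℝ} (hp : ∀ x ∈ L, 0 < p x)
    (hmass : (L.map p).sum ≤ t) : 0 < ordProb p t L := by
  induction L generalizing t with
  | nil => simp [ordProb]
  | cons b L ih =>
    simp only [List.mem_cons, forall_eq_or_imp] at hp
    simp only [List.map_cons, List.sum_cons] at hmass
    have hL : 0 ≤ (L.map p).sum := List.sum_nonneg (by simpa using fun x hx => (hp.2 x hx).le)
    exact mul_pos (div_pos hp.1 (by linarith [hp.1])) (ih hp.2 (by linarith))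

lemma setProb_eq_sum_toFinset [DecidableEq α] (p : α → ℝ) (t : ℝ) (S : Finset α) :
    setProb p t S = ∑ π ∈ S.toList.permutations.toFinset, ordProb p t π := by
  rw [setProb, ← List.sum_toFinset _ (List.nodup_permutations _ S.nodup_toList)]

lemma setProb_pos [DecidableEq α] {p : α → ℝ} {t : ℝ} {S : Finset α} (hp : ∀ x ∈ S, 0 < p x)
    (hmass : ∑ x ∈ S, p x ≤ t) : 0 < setProb p t S := by
  rw [setProb_eq_sum_toFinset]
  refine sum_pos (fun π hπ => ?_) ⟨S.toList, by simp⟩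
  have hperm : π.Perm S.toList := by simpa using hπ
  refine ordProb_pos (fun x hx => hp x (by simpa using hperm.mem_iff.1 hx)) ?_
  rwa [(hperm.map p).sum_eq, sum_map_toList]

lemma toList_erase_perm [DecidableEq α] (S : Finset α) (b : α) :
    (S.erase b).toList.Perm (S.toList.erase b) :=
  Multiset.coe_eq_coe.1 (by simp [← Multiset.coe_erase])

lemma cons_mem_permutations_toList [DecidableEq α] {S : Finset α} {b : α} {L : List α} :
    b :: L ∈ S.toList.permutations ↔ b ∈ S ∧ L ∈ (S.erase b).toList.permutations := by
  simp only [List.mem_permutations, List.cons_perm_iff_perm_erase, mem_toList,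
    (toList_erase_perm S b).congr_right]

lemma toFinset_permutations_toList [DecidableEq α] {S : Finset α} (hS : S.Nonempty) :
    S.toList.permutations.toFinset =
      S.biUnion fun b => (S.erase b).toList.permutations.toFinset.image (b :: ·) := by
  ext π
  cases π with
  | nil => simpa [List.mem_permutations, eq_comm] using hS.ne_empty
  | cons b L =>
    simp only [List.mem_toFinset, cons_mem_permutations_toList, mem_biUnion, mem_image,
      List.cons.injEq]
    constructor
    · exact fun ⟨hb, hL⟩ => ⟨b, hb, L, hL, rfl, rfl⟩
    · rintro ⟨c, hc, L', hL', rfl, rfl⟩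
      exact ⟨hc, hL'⟩

lemma setProb_eq_sum_erase [DecidableEq α] (p : α → ℝ) (t : ℝ) {S : Finset α} (hS : S.Nonempty) :
    setProb p t S = ∑ b ∈ S, p b / t * setProb p (t - p b) (S.erase b) := by
  have hdisj : (S : Set α).PairwiseDisjoint
      fun b => (S.erase b).toList.permutations.toFinset.image (b :: ·) := by
    intro b _ c _ hbc
    simp only [Function.onFun, disjoint_left, mem_image]
    rintro _ ⟨L, -, rfl⟩ ⟨L', -, h⟩
    exact hbc (List.cons.inj h).1.symm
  rw [setProb_eq_sum_toFinset, toFinset_permutations_toList hS, sum_biUnion hdisj]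
  refine sum_congr rfl fun b _ => ?_
  rw [sum_image fun _ _ _ _ h => List.cons_injective h, setProb_eq_sum_toFinset, mul_sum]
  rfl

lemma sum_div_mul_setProb_erase_div [DecidableEq α] (p : α → ℝ) (t : ℝ) {S : Finset α}
    (hS : S.Nonempty) (hZ : setProb p t S ≠ 0) :
    ∑ b ∈ S, p b / t * (setProb p (t - p b) (S.erase b) / setProb p t S) = 1 := by
  simp_rw [← mul_div_assoc, ← sum_div, ← setProb_eq_sum_erase p t hS, div_self hZ]

theorem baseline_two_sample_form [DecidableEq α] (D S : Finset α) (hS : S ⊆ D)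
    (hcard : 2 ≤ S.card) (s : α) (hs : s ∈ S) (p f : α → ℝ)
    (hp : ∀ x ∈ D, 0 < p x) (hsum : ∑ x ∈ D, p x = 1) :
    ∑ s' ∈ S, p s' * (if s' = s then 1 else
        setProb p (1 - p s - p s') ((S.erase s).erase s')
          / setProb p (1 - p s) (S.erase s)) * f s'
      = ∑ s' ∈ S.erase s, (p s' / (1 - p s)) *
          (setProb p (1 - p s - p s') ((S.erase s).erase s')
            / setProb p (1 - p s) (S.erase s)) *
          (p s * f s + (1 - p s) * f s') := by
  have hne : (S.erase s).Nonempty := by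
    rw [← card_pos, card_erase_of_mem hs]; omega
  have hpos : ∀ x ∈ S.erase s, 0 < p x := fun x hx => hp x (hS (mem_of_mem_erase hx))
  have hmass : ∑ x ∈ S.erase s, p x ≤ 1 - p s := by
    rw [← hsum, ← sum_erase_eq_sub (hS hs)]
    exact sum_le_sum_of_subset_of_nonneg (erase_subset_erase s hS)
      fun x hx _ => (hp x (mem_of_mem_erase hx)).le
  have ht : 0 < 1 - p s := (sum_pos hpos hne).trans_le hmass
  have hnorm := sum_div_mul_setProb_erase_div p (1 - p s) hne (setProb_pos hpos hmass).ne'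
  rw [← add_sum_erase _ _ hs, if_pos rfl]
  simp_rw [mul_add, sum_add_distrib, ← sum_mul, hnorm]
  refine congrArg₂ (· + ·) (by ring) (sum_congr rfl fun s' hs' => ?_)
  rw [if_neg (ne_of_mem_erase hs')]
  field_simp
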